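/- arXiv:2105.01112 — 5 statements merged into one kernel-verified Lean document; each statement's English description precedes it below -/
import Mathlib

section
/- Let (A,>,≥) and (B,≻,⪰) be extended well-founded sets (i.e., > well-founded, ≥ a quasi-order, > ⊆ ≥, and x > y ≥ z implies x > z). On the set M of strongly monotonic functions from A to B, define F ≻' G iff A is nonempty and F(x) ≻ G(x) for all x, and F ⪰' G iff F(x) ⪰ G(x) for all x. Then (M, ≻', ⪰') is an extended well-founded set. -/
/-- An extended well-founded set: `gt` is a well-founded (transitive) ordering,
`ge` is a quasi-order, `gt` implies `ge`, and `gt ∘ ge ⊆ gt`. -/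
structure IsEWF {α : Type} (gt ge : α → α → Prop) : Prop where
  wf : WellFounded (fun x y => gt y x)
  gt_trans : ∀ x y z, gt x y → gt y z → gt x z
  ge_refl : ∀ x, ge x x
  ge_trans : ∀ x y z, ge x y → ge y z → ge x z
  gt_imp_ge : ∀ x y, gt x y → ge x y
  gt_ge : ∀ x y z, gt x y → ge y z → gt x z

/-- `F` is strongly monotonic: it maps `gtA` to `gtB` and `geA` to `geB`. -/
def StrongMono {A B : Type} (gtA geA : A → A → Prop) (gtB geB : B → B → Prop)
    (F : A → B) : Prop :=
  (∀ x y, gtA x y → gtB (F x) (F y)) ∧ (∀ x y, geA x y → geB (F x) (F y))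

/-- The strongly monotonic functions between two extended well-founded sets,
compared pointwise (with nonemptiness of the domain for the strict order),
again form an extended well-founded set. -/
theorem strongMono_extended_wf {A B : Type}
    (gtA geA : A → A → Prop) (gtB geB : B → B → Prop)
    (hA : IsEWF gtA geA) (hB : IsEWF gtB geB) :
    IsEWF
      (fun F G : {F : A → B // StrongMono gtA geA gtB geB F} =>
        Nonempty A ∧ ∀ x, gtB (F.1 x) (G.1 x))
      (fun F G : {F : A → B // StrongMono gtA geA gtB geB F} =>
        ∀ x, geB (F.1 x) (G.1 x)) := by
  constructor
  · by_cases h : Nonempty A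
    · obtain ⟨a⟩ := h
      have : Subrelation
          (fun G F : {F : A → B // StrongMono gtA geA gtB geB F} =>
            Nonempty A ∧ ∀ x, gtB (F.1 x) (G.1 x))
          (InvImage (fun x y => gtB y x) (fun F => F.1 a)) := fun h => h.2 a
      exact this.wf (InvImage.wf _ hB.wf)
    · exact ⟨fun F => ⟨F, fun G hG => absurd hG.1 h⟩⟩
  · rintro F G H ⟨h1, h2⟩ ⟨_, h3⟩
    exact ⟨h1, fun x => hB.gt_trans _ _ _ (h2 x) (h3 x)⟩
  · exact fun F x => hB.ge_refl _
  · exact fun F G H h1 h2 x => hB.ge_trans _ _ _ (h1 x) (h2 x)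
  · exact fun F G h x => hB.gt_imp_ge _ _ (h.2 x)
  · rintro F G H ⟨h1, h2⟩ h3
    exact ⟨h1, fun x => hB.gt_ge _ _ _ (h2 x) (h3 x)⟩
end

section
/- For the tuple interpretation [[0]]=(0,0), [[s(x)]]=(x_1, x_2+1), [[minus(x,y)]]=(x_1+y_1+y_2+1, x_2), [[quot(x,y)]]=(x_1+x_2+y_1+x_2*y_1+x_2*y_2+1, x_2), each rewrite rule of the quot/minus TRS is strictly oriented: the interpretation of each left-hand side is greater (first component strictly, others weakly) than that of the corresponding right-hand side, for all values of the variables in N^2. -/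
/-- Strict tuple order on `ℕ²`: `x > y` iff `x₁ > y₁` and `x₂ ≥ y₂`. -/
def Gt2 (x y : ℕ × ℕ) : Prop := y.1 < x.1 ∧ y.2 ≤ x.2

/-- `[[0]] = (0,0)`. -/
def zeroI : ℕ × ℕ := (0, 0)

/-- `[[s(x)]] = (x₁, x₂ + 1)`. -/
def sI (x : ℕ × ℕ) : ℕ × ℕ := (x.1, x.2 + 1)

/-- `[[minus(x,y)]] = (x₁ + y₁ + y₂ + 1, x₂)`. -/
def minusI (x y : ℕ × ℕ) : ℕ × ℕ := (x.1 + y.1 + y.2 + 1, x.2)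

/-- `[[quot(x,y)]] = (x₁ + x₂ + y₁ + x₂*y₁ + x₂*y₂ + 1, x₂)`. -/
def quotI (x y : ℕ × ℕ) : ℕ × ℕ :=
  (x.1 + x.2 + y.1 + x.2 * y.1 + x.2 * y.2 + 1, x.2)

/-- All four rules of the quot/minus TRS are strictly oriented by the tuple
interpretation. -/
theorem quot_minus_oriented (x y : ℕ × ℕ) :
    Gt2 (minusI x zeroI) x ∧
    Gt2 (minusI (sI x) (sI y)) (minusI x y) ∧
    Gt2 (quotI zeroI (sI y)) zeroI ∧
    Gt2 (quotI (sI x) (sI y)) (sI (quotI (minusI x y) (sI y))) := by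
  refine ⟨⟨?_, ?_⟩, ⟨?_, ?_⟩, ⟨?_, ?_⟩, ⟨?_, ?_⟩⟩ <;> simp [minusI, zeroI, sI, quotI] <;> nlinarith [x.2 * y.1, x.2 * y.2]
end

section
/- Suppose F : A_1 × ... × A_k → (B → B) is weakly monotonic into the strongly monotonic endofunctions on B, G : A_1 × ... × A_k → N is weakly monotonic, and F(u_1,...,u_k)(v) ⊒ v for all arguments. Then the function (x_1,...,x_k) ↦ F(x_1,...,x_k)^{G(x_1,...,x_k)} (iterated composition) is weakly monotonic into the strongly monotonic endofunctions on B; in particular, for n ≥ m and u_i ⊒ u_i' componentwise, F(u)^n ⊒ F(u')^m pointwise. -/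
/-- Iteration lemma: if `F : A₁ × ... × A_k → (B → B)` is weakly monotonic into
the strongly monotonic endofunctions on `B`, `G : A₁ × ... × A_k → ℕ` is weakly
monotonic, and `F(u)(v) ⊒ v` always, then `x ↦ F(x)^{G(x)}` is weakly monotonic
into the strongly monotonic endofunctions on `B`; in particular for `n ≥ m` and
`u ⊒ u'` componentwise, `F(u)^n ⊒ F(u')^m` pointwise. -/
theorem iterate_weakly_monotonic {k : ℕ} {A : Fin k → Type} {B : Type}
    (geA : ∀ i, A i → A i → Prop)
    (gtB geB : B → B → Prop)
    (geB_refl : ∀ b, geB b b)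
    (geB_trans : ∀ a b c, geB a b → geB b c → geB a c)
    (gt_imp_ge : ∀ a b, gtB a b → geB a b)
    (gt_ge_trans : ∀ a b c, gtB a b → geB b c → gtB a c)
    (F : (∀ i, A i) → B → B) (G : (∀ i, A i) → ℕ)
    (hFsm : ∀ u, (∀ v v', gtB v v' → gtB (F u v) (F u v')) ∧
                 (∀ v v', geB v v' → geB (F u v) (F u v')))
    (hFwm : ∀ u u', (∀ i, geA i (u i) (u' i)) → ∀ v, geB (F u v) (F u' v))
    (hGwm : ∀ u u', (∀ i, geA i (u i) (u' i)) → G u' ≤ G u)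
    (hext : ∀ u v, geB (F u v) v) :
    (∀ u, (∀ v v', gtB v v' → gtB ((F u)^[G u] v) ((F u)^[G u] v')) ∧
          (∀ v v', geB v v' → geB ((F u)^[G u] v) ((F u)^[G u] v'))) ∧
    (∀ u u', (∀ i, geA i (u i) (u' i)) →
      ∀ v, geB ((F u)^[G u] v) ((F u')^[G u'] v)) ∧
    (∀ u u', (∀ i, geA i (u i) (u' i)) →
      ∀ n m, m ≤ n → ∀ v, geB ((F u)^[n] v) ((F u')^[m] v)) := by
  -- iterate monotonicity
  have itgt : ∀ u n, ∀ v v', gtB v v' → gtB ((F u)^[n] v) ((F u)^[n] v') := by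
    intro u n
    induction n with
    | zero => intro v v' h; simpa using h
    | succ n ih =>
      intro v v' h
      rw [Function.iterate_succ_apply', Function.iterate_succ_apply']
      exact (hFsm u).1 _ _ (ih v v' h)
  have itge : ∀ u n, ∀ v v', geB v v' → geB ((F u)^[n] v) ((F u)^[n] v') := by
    intro u n
    induction n with
    | zero => intro v v' h; simpa using h
    | succ n ih =>
      intro v v' h
      rw [Function.iterate_succ_apply', Function.iterate_succ_apply']
      exact (hFsm u).2 _ _ (ih v v' h)
  have itext : ∀ u n m, m ≤ n → ∀ v, geB ((F u)^[n] v) ((F u)^[m] v) := by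
    intro u n m hmn v
    induction n with
    | zero => interval_cases m; simpa using geB_refl v
    | succ n ih =>
      rcases Nat.lt_or_ge m (n+1) with h | h
      · rw [Function.iterate_succ_apply']
        exact geB_trans _ _ _ (hext u _) (ih (Nat.lt_succ_iff.mp h))
      · have : m = n+1 := le_antisymm hmn h
        subst this; exact geB_refl _
  have itwm : ∀ u u', (∀ i, geA i (u i) (u' i)) → ∀ n v,
      geB ((F u)^[n] v) ((F u')^[n] v) := by
    intro u u' h n
    induction n with
    | zero => intro v; simpa using geB_refl v
    | succ n ih =>
      intro v
      rw [Function.iterate_succ_apply', Function.iterate_succ_apply']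
      exact geB_trans _ _ _ ((hFsm u).2 _ _ (ih v)) (hFwm u u' h _)
  have main : ∀ u u', (∀ i, geA i (u i) (u' i)) →
      ∀ n m, m ≤ n → ∀ v, geB ((F u)^[n] v) ((F u')^[m] v) := by
    intro u u' h n m hmn v
    exact geB_trans _ _ _ (itext u n m hmn v) (itwm u u' h m v)
  exact ⟨fun u => ⟨itgt u (G u), itge u (G u)⟩,
    fun u u' h v => main u u' h (G u) (G u') (hGwm u u' h) v, main⟩
end

section
/- Let each data constructor c with arguments of sorts ι_1,...,ι_m and output sort κ be interpreted by an additive function, i.e., there is a ∈ N with Σ_l P_l(x^1,...,x^m) ≤ a + Σ_i Σ_j x^i_j for all tuple arguments. Then there is a constant b > 0 such that every data term s of size |s| ≤ n satisfies Σ_l [[s]]_l ≤ b*n; in particular every component [[s]]_l ≤ b*n. -/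
/-- Well-typed data terms over a signature of data constructors `C`, where
`ar c` is the arity of `c`, `outW c` the tuple width of its output sort, and
`argW c i` the tuple width of the sort of its `i`-th argument.  Terms are
indexed by the tuple width of their sort. -/
inductive DTerm (C : Type) (ar : C → ℕ) (outW : C → ℕ)
    (argW : (c : C) → Fin (ar c) → ℕ) : ℕ → Type where
  | node : (c : C) → ((i : Fin (ar c)) → DTerm C ar outW argW (argW c i)) →
      DTerm C ar outW argW (outW c)

/-- The size `|s|`: the number of symbols in a data term. -/
def dsize {C : Type} {ar : C → ℕ} {outW : C → ℕ}
    {argW : (c : C) → Fin (ar c) → ℕ} :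
    ∀ {w : ℕ}, DTerm C ar outW argW w → ℕ
  | _, .node c ch => 1 + ∑ i : Fin (ar c), dsize (ch i)

/-- The interpretation of a data term, given an interpretation `I c` of each
data constructor `c` as a function from tuples of naturals to a tuple. -/
def dinterp {C : Type} {ar : C → ℕ} {outW : C → ℕ}
    {argW : (c : C) → Fin (ar c) → ℕ}
    (I : (c : C) → ((i : Fin (ar c)) → (Fin (argW c i) → ℕ)) →
      (Fin (outW c) → ℕ)) :
    ∀ {w : ℕ}, DTerm C ar outW argW w → (Fin w → ℕ)
  | _, .node c ch => I c (fun i => dinterp I (ch i))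

/-- If every data constructor is interpreted by an additive function, then
there is a constant `b > 0` such that every data term `s` with `|s| ≤ n`
satisfies `Σ_l [[s]]_l ≤ b * n`; in particular every component
`[[s]]_l ≤ b * n`. -/
theorem additive_interpretation_linear_bound
    {C : Type} [Fintype C] {ar : C → ℕ} {outW : C → ℕ}
    {argW : (c : C) → Fin (ar c) → ℕ}
    (I : (c : C) → ((i : Fin (ar c)) → (Fin (argW c i) → ℕ)) →
      (Fin (outW c) → ℕ))
    (hadd : ∀ c : C, ∃ a : ℕ,
      ∀ x : (i : Fin (ar c)) → (Fin (argW c i) → ℕ),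
        (∑ l, I c x l) ≤ a + ∑ i, ∑ j, x i j) :
    ∃ b : ℕ, 0 < b ∧ ∀ (w : ℕ) (s : DTerm C ar outW argW w) (n : ℕ),
      dsize s ≤ n →
        (∑ l, dinterp I s l) ≤ b * n ∧ ∀ l, dinterp I s l ≤ b * n := by
  classical
  set a : C → ℕ := fun c => (hadd c).choose with ha
  set b : ℕ := (Finset.univ.sup a) + 1 with hb
  have hbc : ∀ c : C, a c ≤ b := fun c =>
    le_trans (Finset.le_sup (Finset.mem_univ c)) (Nat.le_succ _)
  have key : ∀ (w : ℕ) (s : DTerm C ar outW argW w),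
      (∑ l, dinterp I s l) ≤ b * dsize s := by
    intro w s
    induction s with
    | node c ch ih =>
      have h1 : (∑ l, dinterp I (DTerm.node c ch) l)
          ≤ a c + ∑ i, ∑ j, dinterp I (ch i) j := by
        simpa [dinterp] using (hadd c).choose_spec (fun i => dinterp I (ch i))
      have h2 : (∑ i, ∑ j, dinterp I (ch i) j) ≤ ∑ i, b * dsize (ch i) :=
        Finset.sum_le_sum (fun i _ => ih i)
      calc (∑ l, dinterp I (DTerm.node c ch) l)
          ≤ a c + ∑ i, ∑ j, dinterp I (ch i) j := h1
        _ ≤ b + ∑ i, b * dsize (ch i) := Nat.add_le_add (hbc c) h2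
        _ = b * dsize (DTerm.node c ch) := by
            simp [dsize, Finset.mul_sum, Nat.mul_add]
  refine ⟨b, Nat.succ_pos _, fun w s n hn => ?_⟩
  have hsum : (∑ l, dinterp I s l) ≤ b * n :=
    le_trans (key w s) (Nat.mul_le_mul_left b hn)
  exact ⟨hsum, fun l =>
    le_trans (Finset.single_le_sum (fun i _ => Nat.zero_le _) (Finset.mem_univ l)) hsum⟩
end

section
/- Let each data constructor c be interpreted by a linearly bounded function, i.e., each component satisfies P_l(x^1,...,x^m) ≤ a*(1 + Σ_i Σ_j x^i_j) for a constant a. Then there is a constant b > 0 such that every data term s with |s| ≤ n satisfies [[s]]_l ≤ 2^{b*n} for every component l. -/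
/-! Once inputs are bounded by `M ≥ 1`, a linearly bounded constructor `c` has outputs at most
`a (1 + Σᵢ wᵢ) M`, so a single constant `B` (a maximum over the finitely many constructors)
multiplies bounds at each node. By induction `[[s]]_l ≤ B ^ |s| ≤ 2 ^ (B |s|)`. -/

theorem sum_sum_le_mul_of_le {k : ℕ} {w : Fin k → ℕ} (x : (i : Fin k) → Fin (w i) → ℕ)
    {M : ℕ} (hx : ∀ i j, x i j ≤ M) : ∑ i, ∑ j, x i j ≤ (∑ i, w i) * M := by
  rw [Finset.sum_mul]
  refine Finset.sum_le_sum fun i _ => ?_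
  simpa using Finset.sum_le_card_nsmul Finset.univ (x i) M fun j _ => hx i j

theorem linear_bound_le_mul_of_le {k : ℕ} {w : Fin k → ℕ} (a : ℕ)
    (x : (i : Fin k) → Fin (w i) → ℕ) {M : ℕ} (hM : 1 ≤ M) (hx : ∀ i j, x i j ≤ M) :
    a * (1 + ∑ i, ∑ j, x i j) ≤ a * (1 + ∑ i, w i) * M := by
  have hsum := sum_sum_le_mul_of_le x hx
  rw [mul_assoc]
  gcongr
  nlinarith

section

variable {C : Type} {ar : C → ℕ} {outW : C → ℕ} {argW : (c : C) → Fin (ar c) → ℕ}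

def IsGrowthBound (I : (c : C) → ((i : Fin (ar c)) → (Fin (argW c i) → ℕ)) → (Fin (outW c) → ℕ))
    (B : ℕ) : Prop :=
  ∀ c x M, 1 ≤ M → (∀ i j, x i j ≤ M) → ∀ l, I c x l ≤ B * M

variable {I : (c : C) → ((i : Fin (ar c)) → (Fin (argW c i) → ℕ)) → (Fin (outW c) → ℕ)}

theorem exists_isGrowthBound [Fintype C]
    (hlin : ∀ c : C, ∃ a : ℕ, ∀ x : (i : Fin (ar c)) → (Fin (argW c i) → ℕ),
      ∀ l, I c x l ≤ a * (1 + ∑ i, ∑ j, x i j)) :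
    ∃ B, 0 < B ∧ IsGrowthBound I B := by
  choose a ha using hlin
  let K : C → ℕ := fun c => a c * (1 + ∑ i, argW c i)
  refine ⟨1 + Finset.univ.sup K, by positivity, fun c x M hM hx l => ?_⟩
  calc I c x l ≤ a c * (1 + ∑ i, ∑ j, x i j) := ha c x l
    _ ≤ K c * M := linear_bound_le_mul_of_le (a c) x hM hx
    _ ≤ (1 + Finset.univ.sup K) * M := by
      gcongr
      exact (Finset.le_sup (Finset.mem_univ c)).trans (Nat.le_add_left _ 1)

theorem dinterp_le_pow_dsize {B : ℕ} (hB0 : 0 < B) (hB : IsGrowthBound I B) :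
    ∀ {w : ℕ} (s : DTerm C ar outW argW w) (l : Fin w), dinterp I s l ≤ B ^ dsize s := by
  intro w s
  induction s with
  | node c ch ih =>
    intro l
    set S := ∑ i, dsize (ch i)
    have hchild : ∀ i j, dinterp I (ch i) j ≤ B ^ S := fun i j =>
      (ih i j).trans (Nat.pow_le_pow_right hB0
        (Finset.single_le_sum (fun i _ => Nat.zero_le (dsize (ch i))) (Finset.mem_univ i)))
    calc dinterp I (.node c ch) l ≤ B * B ^ S := hB c _ _ (Nat.one_le_pow _ _ hB0) hchild l
      _ = B ^ dsize (.node c ch) := by rw [dsize, pow_add, pow_one]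

end

/-- If every data constructor is interpreted by a linearly bounded function,
then there is a constant `b > 0` such that every data term `s` with `|s| ≤ n`
satisfies `[[s]]_l ≤ 2^(b*n)` for every component `l`. -/
theorem linearly_bounded_interpretation_exponential_bound
    {C : Type} [Fintype C] {ar : C → ℕ} {outW : C → ℕ}
    {argW : (c : C) → Fin (ar c) → ℕ}
    (I : (c : C) → ((i : Fin (ar c)) → (Fin (argW c i) → ℕ)) →
      (Fin (outW c) → ℕ))
    (hlin : ∀ c : C, ∃ a : ℕ,
      ∀ x : (i : Fin (ar c)) → (Fin (argW c i) → ℕ),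
        ∀ l, I c x l ≤ a * (1 + ∑ i, ∑ j, x i j)) :
    ∃ b : ℕ, 0 < b ∧ ∀ (w : ℕ) (s : DTerm C ar outW argW w) (n : ℕ),
      dsize s ≤ n → ∀ l, dinterp I s l ≤ 2 ^ (b * n) := by
  obtain ⟨B, hB0, hB⟩ := exists_isGrowthBound hlin
  refine ⟨B, hB0, fun w s n hn l => ?_⟩
  calc dinterp I s l ≤ B ^ dsize s := dinterp_le_pow_dsize hB0 hB s l
    _ ≤ B ^ n := Nat.pow_le_pow_right hB0 hn
    _ ≤ (2 ^ B) ^ n := Nat.pow_le_pow_left Nat.lt_two_pow_self.le n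
    _ = 2 ^ (B * n) := (pow_mul 2 B n).symm
end
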